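/- Assume f is (ζ, λ)-quasar-strongly convex with respect to x* and g satisfies ER(ρ) with noise σ². Then SGD with constant step size γ ∈ (0, ζ/(2ρ + L)] satisfies E‖x^k - x*‖² ≤ (1 - γζλ)^k ‖x^0 - x*‖² + 2γσ²/(ζλ). -/

import Mathlib

/-!
Expanding `‖x - γ g(x) - x*‖²`, quasar strong convexity bounds the cross term
`⟨∇f(x), x - x*⟩` from below by `ζ (f(x) - f*) + ζλ/2 ‖x - x*‖²`, while the ER condition and
smoothness bound the second moment by `E‖g(x)‖² ≤ 2(2ρ + L)(f(x) - f*) + 2σ²`. For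
`γ ≤ ζ/(2ρ + L)` the function-gap terms then have a favourable sign, which leaves the contraction
`E‖x^{k+1} - x*‖² ≤ (1 - γζλ) E‖x^k - x*‖² + 2γ²σ²`; unrolling it gives the bound.
-/

open scoped RealInnerProductSpace
open Finset

section WeightedSums

variable {E : Type*} [NormedAddCommGroup E] [InnerProductSpace ℝ E] {ι : Type*} [Fintype ι]
  {p : ι → ℝ}

lemma sum_mul_inner_eq_inner_sum_smul (v : ι → E) (w : E) :
    ∑ i, p i * ⟪v i, w⟫ = ⟪∑ i, p i • v i, w⟫ := by
  simp_rw [sum_inner, real_inner_smul_left]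

lemma sum_mul_norm_add_sq_of_sum_smul_eq_zero (hp1 : ∑ i, p i = 1) {v : ι → E}
    (hv : ∑ i, p i • v i = 0) (c : E) :
    ∑ i, p i * ‖v i + c‖ ^ 2 = ∑ i, p i * ‖v i‖ ^ 2 + ‖c‖ ^ 2 := by
  have hcross : ∑ i, p i * ⟪v i, c⟫ = 0 := by
    rw [sum_mul_inner_eq_inner_sum_smul, hv, inner_zero_left]
  calc ∑ i, p i * ‖v i + c‖ ^ 2
      = ∑ i, p i * ‖v i‖ ^ 2 + 2 * ∑ i, p i * ⟪v i, c⟫ + (∑ i, p i) * ‖c‖ ^ 2 := by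
        simp only [norm_add_sq_real, mul_sum, sum_mul, ← sum_add_distrib]
        exact sum_congr rfl fun i _ => by ring
    _ = _ := by rw [hcross, hp1]; ring

lemma sum_mul_norm_add_add_sq_le (hp0 : ∀ i, 0 ≤ p i) (hp1 : ∑ i, p i = 1) {a b : ι → E}
    (ha : ∑ i, p i • a i = 0) (hb : ∑ i, p i • b i = 0) (c : E) :
    ∑ i, p i * ‖a i + b i + c‖ ^ 2 ≤
      2 * ∑ i, p i * ‖a i‖ ^ 2 + 2 * ∑ i, p i * ‖b i‖ ^ 2 + ‖c‖ ^ 2 := by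
  have hab : ∑ i, p i • (a i + b i) = 0 := by
    simp only [smul_add, sum_add_distrib, ha, hb, add_zero]
  rw [sum_mul_norm_add_sq_of_sum_smul_eq_zero hp1 hab, mul_sum, mul_sum, ← sum_add_distrib]
  gcongr with i
  have := parallelogram_law_with_norm ℝ (a i) (b i)
  nlinarith [hp0 i, sq_nonneg ‖a i - b i‖]

lemma sum_mul_norm_sub_smul_sq (hp1 : ∑ i, p i = 1) (v : ι → E) (d : E) (γ : ℝ) :
    ∑ i, p i * ‖d - γ • v i‖ ^ 2 =
      ‖d‖ ^ 2 - 2 * γ * ⟪∑ i, p i • v i, d⟫ + γ ^ 2 * ∑ i, p i * ‖v i‖ ^ 2 := by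
  rw [← sum_mul_inner_eq_inner_sum_smul]
  calc ∑ i, p i * ‖d - γ • v i‖ ^ 2
      = (∑ i, p i) * ‖d‖ ^ 2 - 2 * γ * ∑ i, p i * ⟪v i, d⟫ + γ ^ 2 * ∑ i, p i * ‖v i‖ ^ 2 := by
        simp only [norm_sub_sq_real, inner_smul_right, norm_smul, mul_pow, Real.norm_eq_abs,
          sq_abs, real_inner_comm d, mul_sum, sum_mul, ← sum_sub_distrib, ← sum_add_distrib]
        exact sum_congr rfl fun i _ => by ring
    _ = _ := by rw [hp1, one_mul]

end WeightedSums

section Optimization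

variable {E : Type*} [NormedAddCommGroup E] [InnerProductSpace ℝ E]

/-- `L`-smoothness, in the form of the quadratic upper bound it implies. -/
def HasQuadraticUpperBound (f : E → ℝ) (gradf : E → E) (L : ℝ) : Prop :=
  ∀ x z : E, f z ≤ f x + ⟪gradf x, z - x⟫ + L / 2 * ‖z - x‖ ^ 2

def IsQuasarStronglyConvex (f : E → ℝ) (gradf : E → E) (ζ lam : ℝ) (xstar : E) : Prop :=
  ∀ x : E, f xstar ≥ f x + (1 / ζ) * ⟪gradf x, xstar - x⟫ + lam / 2 * ‖xstar - x‖ ^ 2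

variable {f : E → ℝ} {gradf : E → E} {L ζ lam : ℝ} {xstar : E}

lemma HasQuadraticUpperBound.norm_sq_le (hsmooth : HasQuadraticUpperBound f gradf L)
    (hL : 0 < L) {m : ℝ} (hm : ∀ z, m ≤ f z) (y : E) :
    ‖gradf y‖ ^ 2 ≤ 2 * L * (f y - m) := by
  have h := (hm _).trans (hsmooth y (y - L⁻¹ • gradf y))
  rw [sub_sub_cancel_left, inner_neg_right, real_inner_smul_right, real_inner_self_eq_norm_sq,
    norm_neg, norm_smul, Real.norm_of_nonneg (inv_nonneg.2 hL.le)] at h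
  have hdescent : L / 2 * (L⁻¹ * ‖gradf y‖) ^ 2 - L⁻¹ * ‖gradf y‖ ^ 2
      = -(‖gradf y‖ ^ 2 / (2 * L)) := by
    field_simp
    ring
  have : ‖gradf y‖ ^ 2 / (2 * L) ≤ f y - m := by linarith
  rwa [div_le_iff₀ (by positivity), mul_comm] at this

lemma HasQuadraticUpperBound.grad_eq_zero (hsmooth : HasQuadraticUpperBound f gradf L)
    (hL : 0 < L) (hmin : ∀ z, f xstar ≤ f z) : gradf xstar = 0 := by
  have h := hsmooth.norm_sq_le hL hmin xstar
  rw [sub_self, mul_zero] at h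
  exact norm_eq_zero.1 (pow_eq_zero_iff two_ne_zero |>.1 (le_antisymm h (sq_nonneg _)))

lemma IsQuasarStronglyConvex.le_inner (hquasar : IsQuasarStronglyConvex f gradf ζ lam xstar)
    (hζ : 0 < ζ) (y : E) :
    ζ * (f y - f xstar) + ζ * lam / 2 * ‖y - xstar‖ ^ 2 ≤ ⟪gradf y, y - xstar⟫ := by
  have h := hquasar y
  rw [← neg_sub y xstar, inner_neg_right, norm_neg] at h
  have h' : ζ * (f y - f xstar + lam / 2 * ‖y - xstar‖ ^ 2)
      ≤ ζ * ((1 / ζ) * ⟪gradf y, y - xstar⟫) :=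
    mul_le_mul_of_nonneg_left (by linarith) hζ.le
  rw [← mul_assoc, mul_one_div_cancel hζ.ne', one_mul] at h'
  linarith

lemma IsQuasarStronglyConvex.mul_le_two_sub_mul [Nontrivial E]
    (hquasar : IsQuasarStronglyConvex f gradf ζ lam xstar)
    (hsmooth : HasQuadraticUpperBound f gradf L) (hL : 0 < L) (hζ0 : 0 < ζ) (hζ1 : ζ ≤ 1)
    (hmin : ∀ z, f xstar ≤ f z) : ζ * lam ≤ (2 - ζ) * L := by
  obtain ⟨v, hv⟩ := exists_ne (0 : E)
  have hD : 0 < ‖v‖ ^ 2 := by positivity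
  have hinner := hquasar.le_inner hζ0 (xstar + v)
  have hback := hsmooth (xstar + v) xstar
  have hforth := hsmooth xstar (xstar + v)
  rw [add_sub_cancel_left] at hinner hforth
  rw [sub_add_cancel_left, inner_neg_right, norm_neg] at hback
  rw [hsmooth.grad_eq_zero hL hmin, inner_zero_left] at hforth
  have hgap := sub_nonneg.2 (hmin (xstar + v))
  -- `ζ (Δ + λ/2 ‖v‖²) ≤ ⟨∇f(x* + v), v⟩ ≤ Δ + L/2 ‖v‖²` with `Δ ≤ L/2 ‖v‖²`
  nlinarith

end Optimization

section Step

variable {E : Type*} [NormedAddCommGroup E] [InnerProductSpace ℝ E] {ι : Type*} [Fintype ι]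
  {p : ι → ℝ} {f : E → ℝ} {gradf : E → E} {g : ι → E → E} {L ζ lam ρ γ : ℝ} {xstar : E}

lemma sum_mul_norm_sq_le_of_expectedResidual (hp0 : ∀ i, 0 ≤ p i) (hp1 : ∑ i, p i = 1)
    (hsmooth : HasQuadraticUpperBound f gradf L) (hL : 0 < L) (hmin : ∀ z, f xstar ≤ f z)
    (hunbiased : ∀ x : E, ∑ i, p i • g i x = gradf x)
    (hER : ∀ x : E, (∑ i, p i * ‖g i x - g i xstar - (gradf x - gradf xstar)‖ ^ 2) ≤
        2 * ρ * (f x - f xstar)) (y : E) :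
    ∑ i, p i * ‖g i y‖ ^ 2 ≤
      2 * (2 * ρ + L) * (f y - f xstar) + 2 * ∑ i, p i * ‖g i xstar‖ ^ 2 := by
  have hgrad := hsmooth.grad_eq_zero hL hmin
  set a : ι → E := fun i => g i y - g i xstar - (gradf y - gradf xstar)
  have ha : ∑ i, p i • a i = 0 := by
    simp only [a, smul_sub, sum_sub_distrib, hunbiased, ← sum_smul, hp1, one_smul, sub_self]
  have hb : ∑ i, p i • g i xstar = 0 := by rw [hunbiased, hgrad]
  have hsplit : ∀ i, g i y = a i + g i xstar + gradf y := fun i => by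
    simp only [a, hgrad, sub_zero]
    abel
  simp only [hsplit]
  have := sum_mul_norm_add_add_sq_le hp0 hp1 ha hb (gradf y)
  linarith [hER y, hsmooth.norm_sq_le hL hmin y]

lemma sum_mul_norm_sgd_step_sub_sq_le (hp0 : ∀ i, 0 ≤ p i) (hp1 : ∑ i, p i = 1)
    (hsmooth : HasQuadraticUpperBound f gradf L) (hL : 0 < L)
    (hquasar : IsQuasarStronglyConvex f gradf ζ lam xstar) (hζ : 0 < ζ)
    (hmin : ∀ z, f xstar ≤ f z) (hunbiased : ∀ x : E, ∑ i, p i • g i x = gradf x)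
    (hER : ∀ x : E, (∑ i, p i * ‖g i x - g i xstar - (gradf x - gradf xstar)‖ ^ 2) ≤
        2 * ρ * (f x - f xstar))
    (hγ0 : 0 < γ) (hγ : γ * (2 * ρ + L) ≤ ζ) (y : E) :
    ∑ i, p i * ‖y - γ • g i y - xstar‖ ^ 2 ≤
      (1 - γ * ζ * lam) * ‖y - xstar‖ ^ 2 + 2 * γ ^ 2 * ∑ i, p i * ‖g i xstar‖ ^ 2 := by
  simp only [sub_right_comm y _ xstar]
  rw [sum_mul_norm_sub_smul_sq hp1, hunbiased]
  have hinner := hquasar.le_inner hζ y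
  have hmoment := sum_mul_norm_sq_le_of_expectedResidual hp0 hp1 hsmooth hL hmin hunbiased hER y
  have hgap := sub_nonneg.2 (hmin y)
  nlinarith [mul_le_mul_of_nonneg_left hmoment (sq_nonneg γ),
    mul_nonneg (mul_nonneg hγ0.le hgap) (sub_nonneg.2 hγ)]

end Step

section Paths

variable {ι : Type*}

def padDefault [Inhabited ι] {k : ℕ} (ω : Fin k → ι) : ℕ → ι :=
  fun m => if h : m < k then ω ⟨m, h⟩ else default

lemma padDefault_snoc_of_lt [Inhabited ι] {k : ℕ} (ω : Fin k → ι) (i : ι) {m : ℕ} (hm : m < k) :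
    padDefault (Fin.snoc ω i : Fin (k + 1) → ι) m = padDefault ω m := by
  simp [padDefault, hm, Nat.lt_succ_of_lt hm, Fin.snoc]

lemma padDefault_snoc_self [Inhabited ι] {k : ℕ} (ω : Fin k → ι) (i : ι) :
    padDefault (Fin.snoc ω i : Fin (k + 1) → ι) k = i := by
  simp [padDefault, Fin.snoc]

variable {E : Type*} {x : ℕ → (ℕ → ι) → E} {F : ι → E → E} {x0 : E}

lemma apply_congr_of_forall_lt_eq (hx0 : ∀ ω, x 0 ω = x0)
    (hrec : ∀ k ω, x (k + 1) ω = F (ω k) (x k ω)) :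
    ∀ (k : ℕ) {ω ω' : ℕ → ι}, (∀ m < k, ω m = ω' m) → x k ω = x k ω'
  | 0, ω, ω', _ => by rw [hx0, hx0]
  | k + 1, ω, ω', h => by
    rw [hrec, hrec, h k k.lt_succ_self,
      apply_congr_of_forall_lt_eq hx0 hrec k fun m hm => h m (Nat.lt_succ_of_lt hm)]

lemma apply_padDefault_snoc [Inhabited ι] (hx0 : ∀ ω, x 0 ω = x0)
    (hrec : ∀ k ω, x (k + 1) ω = F (ω k) (x k ω)) {k : ℕ} (ω : Fin k → ι) (i : ι) :
    x (k + 1) (padDefault (Fin.snoc ω i : Fin (k + 1) → ι)) = F i (x k (padDefault ω)) := by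
  rw [hrec, padDefault_snoc_self]
  exact congrArg (F i) (apply_congr_of_forall_lt_eq hx0 hrec k fun _ => padDefault_snoc_of_lt ω i)

variable [Fintype ι] {p : ι → ℝ}

lemma sum_prod_mul_snoc {k : ℕ} (G : (Fin (k + 1) → ι) → ℝ) :
    ∑ ω : Fin (k + 1) → ι, (∏ s, p (ω s)) * G ω =
      ∑ ω : Fin k → ι, (∏ s, p (ω s)) * ∑ i, p i * G (Fin.snoc ω i) := by
  rw [← (Fin.snocEquiv fun _ => ι).sum_comp, Fintype.sum_prod_type, sum_comm]
  refine sum_congr rfl fun ω _ => ?_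
  rw [mul_sum]
  refine sum_congr rfl fun i _ => ?_
  simp only [Fin.snocEquiv, Equiv.coe_fn_mk, Fin.prod_univ_castSucc, Fin.snoc_castSucc,
    Fin.snoc_last]
  ring

lemma sum_prod_eq_one (hp1 : ∑ i, p i = 1) (k : ℕ) : ∑ ω : Fin k → ι, ∏ s, p (ω s) = 1 := by
  rw [← Fintype.sum_pow, hp1, one_pow]

/-- The drift inequality `E[φ(x_{k+1}) | x_k] ≤ q φ(x_k) + c`, integrated over the first `k`
draws. -/
lemma sum_prod_mul_apply_succ_le [Inhabited ι] (hp0 : ∀ i, 0 ≤ p i) (hp1 : ∑ i, p i = 1)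
    (hx0 : ∀ ω, x 0 ω = x0) (hrec : ∀ k ω, x (k + 1) ω = F (ω k) (x k ω)) {φ : E → ℝ}
    {q c : ℝ} (hdrift : ∀ y, ∑ i, p i * φ (F i y) ≤ q * φ y + c) (k : ℕ) :
    ∑ ω : Fin (k + 1) → ι, (∏ s, p (ω s)) * φ (x (k + 1) (padDefault ω)) ≤
      q * ∑ ω : Fin k → ι, (∏ s, p (ω s)) * φ (x k (padDefault ω)) + c := by
  simp only [sum_prod_mul_snoc, apply_padDefault_snoc hx0 hrec]
  calc ∑ ω : Fin k → ι, (∏ s, p (ω s)) * ∑ i, p i * φ (F i (x k (padDefault ω)))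
      ≤ ∑ ω : Fin k → ι, (∏ s, p (ω s)) * (q * φ (x k (padDefault ω)) + c) :=
        sum_le_sum fun ω _ =>
          mul_le_mul_of_nonneg_left (hdrift _) (prod_nonneg fun s _ => hp0 _)
    _ = q * ∑ ω : Fin k → ι, (∏ s, p (ω s)) * φ (x k (padDefault ω)) +
          c * ∑ ω : Fin k → ι, ∏ s, p (ω s) := by
        simp only [mul_sum, ← sum_add_distrib]
        exact sum_congr rfl fun ω _ => by ring
    _ = _ := by rw [sum_prod_eq_one hp1, mul_one]

end Paths

lemma le_pow_mul_add_div_of_le_mul_add {e : ℕ → ℝ} {a c : ℝ} (ha : 0 < a) (ha1 : 0 ≤ 1 - a)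
    (hc : 0 ≤ c) (h : ∀ n, e (n + 1) ≤ (1 - a) * e n + c) :
    ∀ n, e n ≤ (1 - a) ^ n * e 0 + c / a
  | 0 => by simpa using div_nonneg hc ha.le
  | n + 1 => by
    calc e (n + 1) ≤ (1 - a) * ((1 - a) ^ n * e 0 + c / a) + c :=
          (h n).trans (by gcongr; exact le_pow_mul_add_div_of_le_mul_add ha ha1 hc h n)
      _ = (1 - a) ^ (n + 1) * e 0 + c / a := by field_simp; ring

/-- SGD on an `L`-smooth, `(ζ,λ)`-quasar-strongly convex function under the Expected
Residual condition, with constant step size `γ ∈ (0, ζ/(2ρ + L)]`: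
`E‖x^k - x*‖² ≤ (1 - γζλ)^k ‖x⁰ - x*‖² + 2γσ²/(ζλ)`. -/
theorem sgd_quasar_strongly_convex
    {E : Type*} [NormedAddCommGroup E] [InnerProductSpace ℝ E]
    {ι : Type*} [Fintype ι] [Inhabited ι] (p : ι → ℝ)
    (hp0 : ∀ i, 0 ≤ p i) (hp1 : ∑ i, p i = 1)
    (f : E → ℝ) (gradf : E → E) (g : ι → E → E)
    (L ζ lam ρ σ2 γ : ℝ) (xstar x0 : E)
    (hL : 0 < L) (hζ0 : 0 < ζ) (hζ1 : ζ ≤ 1) (hlam : 0 < lam) (hρ : 0 ≤ ρ)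
    (hsmooth : ∀ x z : E, f z ≤ f x + ⟪gradf x, z - x⟫ + L / 2 * ‖z - x‖ ^ 2)
    (hquasar : ∀ x : E,
        f xstar ≥ f x + (1 / ζ) * ⟪gradf x, xstar - x⟫ + lam / 2 * ‖xstar - x‖ ^ 2)
    (hmin : ∀ x, f xstar ≤ f x)
    (hunbiased : ∀ x : E, ∑ i, p i • g i x = gradf x)
    (hER : ∀ x : E, (∑ i, p i * ‖g i x - g i xstar - (gradf x - gradf xstar)‖ ^ 2) ≤
        2 * ρ * (f x - f xstar))
    (hσ : (∑ i, p i * ‖g i xstar‖ ^ 2) = σ2)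
    (hγ0 : 0 < γ) (hγ : γ ≤ ζ / (2 * ρ + L))
    (x : ℕ → (ℕ → ι) → E)
    (hx0 : ∀ ω, x 0 ω = x0)
    (hrec : ∀ k ω, x (k + 1) ω = x k ω - γ • g (ω k) (x k ω)) :
    ∀ k : ℕ,
      (∑ ω : Fin k → ι, (∏ s, p (ω s)) *
          ‖x k (fun m => if h : m < k then ω ⟨m, h⟩ else default) - xstar‖ ^ 2) ≤
        (1 - γ * ζ * lam) ^ k * ‖x0 - xstar‖ ^ 2 + 2 * γ * σ2 / (ζ * lam) := by
  have hσ2 : 0 ≤ σ2 := hσ ▸ sum_nonneg fun i _ => mul_nonneg (hp0 i) (sq_nonneg _)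
  have hγ' : γ * (2 * ρ + L) ≤ ζ := (le_div_iff₀ (by positivity)).1 hγ
  -- On the zero space nothing bounds `λ`, so `1 - γζλ` may be negative.
  rcases subsingleton_or_nontrivial E with hE | hE
  · have hnorm (v : E) : ‖v‖ = 0 := by rw [Subsingleton.elim v 0, norm_zero]
    intro k
    simp only [hnorm, ne_eq, OfNat.ofNat_ne_zero, not_false_eq_true, zero_pow, mul_zero,
      sum_const_zero, zero_add]
    positivity
  have hcontr : 0 ≤ 1 - γ * ζ * lam := by
    have hζlam := IsQuasarStronglyConvex.mul_le_two_sub_mul hquasar hsmooth hL hζ0 hζ1 hmin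
    have hγL : γ * L ≤ ζ := by nlinarith
    nlinarith [mul_le_mul_of_nonneg_left hζlam hγ0.le,
      mul_le_mul_of_nonneg_left hγL (by linarith : 0 ≤ 2 - ζ), sq_nonneg (1 - ζ)]
  have hdrift (y : E) : ∑ i, p i * ‖y - γ • g i y - xstar‖ ^ 2 ≤
      (1 - γ * ζ * lam) * ‖y - xstar‖ ^ 2 + 2 * γ ^ 2 * σ2 :=
    hσ ▸ sum_mul_norm_sgd_step_sub_sq_le hp0 hp1 hsmooth hL hquasar hζ0 hmin hunbiased hER hγ0
      hγ' y
  have hmean := sum_prod_mul_apply_succ_le (F := fun i y => y - γ • g i y)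
    (φ := fun y => ‖y - xstar‖ ^ 2) hp0 hp1 hx0 hrec hdrift
  intro k
  refine (le_pow_mul_add_div_of_le_mul_add
    (e := fun k => ∑ ω : Fin k → ι, (∏ s, p (ω s)) * ‖x k (padDefault ω) - xstar‖ ^ 2)
    (by positivity) hcontr (mul_nonneg (by positivity) hσ2) hmean k).trans_eq ?_
  simp only [hx0, Fintype.sum_unique, Fin.prod_univ_zero, one_mul]
  field_simp
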